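/- arXiv:2603.26513 — 11 statements merged into one kernel-verified Lean document; each statement's English description precedes it below -/
import Mathlib

section
/- Exact non-Markovian interpolation identity: for every k ≥ 0, the fine error components satisfy e_φ^{(k)} = Σ_{ℓ=0}^{k−1} (Q†TQ)^ℓ (Q†TP) e_σ^{(k−ℓ−1)} + (Q†TQ)^k e_φ^{(0)}. -/
open Matrix

/-- Exact non-Markovian interpolation identity:
`e_φ^{(k)} = Σ_{ℓ=0}^{k−1} (Q†TQ)^ℓ (Q†TP) e_σ^{(k−ℓ−1)} + (Q†TQ)^k e_φ^{(0)}`. -/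
theorem exact_nonMarkovian_interpolation
    (n nc nf : ℕ) (hn : 0 < n) (hnc : 0 < nc) (hnf : 0 < nf) (hsum : n = nc + nf)
    (Ahat : Matrix (Fin n) (Fin n) ℂ)
    (T : Matrix (Fin n) (Fin n) ℂ) (hT : T = 1 - Ahat)
    (P : Matrix (Fin n) (Fin nc) ℂ) (Q : Matrix (Fin n) (Fin nf) ℂ)
    (Pd : Matrix (Fin nc) (Fin n) ℂ) (Qd : Matrix (Fin nf) (Fin n) ℂ)
    (hPdP : Pd * P = 1) (hQdQ : Qd * Q = 1) (hQdP : Qd * P = 0) (hPdQ : Pd * Q = 0)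
    (hcomp : P * Pd + Q * Qd = 1)
    (e0 : Fin n → ℂ)
    (e : ℕ → Fin n → ℂ) (he : ∀ ℓ, e ℓ = (T ^ ℓ) *ᵥ e0)
    (k : ℕ) :
    Qd *ᵥ e k =
      (∑ ℓ ∈ Finset.range k,
        ((Qd * T * Q) ^ ℓ * (Qd * T * P)) *ᵥ (Pd *ᵥ e (k - ℓ - 1)))
      + ((Qd * T * Q) ^ k) *ᵥ (Qd *ᵥ e0) := by
  induction k with
  | zero => simp [he 0]
  | succ k ih =>
      have hM : Qd * T = Qd * T * P * Pd + Qd * T * Q * Qd := by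
        conv_lhs => rw [← Matrix.mul_one (Qd * T), ← hcomp]
        simp [Matrix.mul_add, Matrix.mul_assoc]
      have hstep : Qd *ᵥ e (k + 1)
          = (Qd * T * P) *ᵥ (Pd *ᵥ e k) + (Qd * T * Q) *ᵥ (Qd *ᵥ e k) := by
        have h1 : e (k + 1) = T *ᵥ e k := by
          rw [he (k + 1), he k, pow_succ', mulVec_mulVec]
        rw [h1, mulVec_mulVec]
        conv_lhs => rw [hM]
        rw [Matrix.add_mulVec]
        simp [mulVec_mulVec, Matrix.mul_assoc]
      have hsum' : ∀ (v : ℕ → Fin nf → ℂ),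
          (Qd * T * Q) *ᵥ (∑ ℓ ∈ Finset.range k, v ℓ)
            = ∑ ℓ ∈ Finset.range k, (Qd * T * Q) *ᵥ v ℓ := by
        intro v
        simp only [← Matrix.mulVecLin_apply, map_sum]
      rw [hstep, ih, Matrix.mulVec_add, hsum' fun ℓ =>
        ((Qd * T * Q) ^ ℓ * (Qd * T * P)) *ᵥ Pd *ᵥ e (k - ℓ - 1),
        Finset.sum_range_succ']
      simp only [Nat.succ_sub_succ_eq_sub, Nat.sub_zero, Nat.add_sub_cancel, pow_zero,
        Matrix.one_mul, mulVec_mulVec, ← Matrix.mul_assoc, ← pow_succ']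
      abel
end

section
/- Exact coarse-grained relaxation equation with noise term: define the effective coarse-level propagators T^{(ℓ)} := P† T P^{(ℓ)}. Then for every k ≥ 0, e_σ^{(k+1)} = Σ_{ℓ=0}^{k} T^{(ℓ)} e_σ^{(k−ℓ)} + P†TQ (Q†TQ)^k e_φ^{(0)}. -/
set_option maxRecDepth 4000
open Matrix

lemma mulVec_sum' {m n : ℕ} (A : Matrix (Fin m) (Fin n) ℂ) (s : Finset ℕ) (v : ℕ → Fin n → ℂ) :
    A *ᵥ (∑ i ∈ s, v i) = ∑ i ∈ s, A *ᵥ v i :=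
  map_sum A.mulVecLin v s

/-- Exact coarse-grained relaxation equation with noise term:
with `T^{(ℓ)} := P† T P^{(ℓ)}`,
`e_σ^{(k+1)} = Σ_{ℓ=0}^{k} T^{(ℓ)} e_σ^{(k−ℓ)} + P†TQ (Q†TQ)^k e_φ^{(0)}`. -/
theorem exact_coarse_grained_relaxation
    (n nc nf : ℕ) (hn : 0 < n) (hnc : 0 < nc) (hnf : 0 < nf) (hsum : n = nc + nf)
    (Ahat : Matrix (Fin n) (Fin n) ℂ)
    (T : Matrix (Fin n) (Fin n) ℂ) (hT : T = 1 - Ahat)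
    (P : Matrix (Fin n) (Fin nc) ℂ) (Q : Matrix (Fin n) (Fin nf) ℂ)
    (Pd : Matrix (Fin nc) (Fin n) ℂ) (Qd : Matrix (Fin nf) (Fin n) ℂ)
    (hPdP : Pd * P = 1) (hQdQ : Qd * Q = 1) (hQdP : Qd * P = 0) (hPdQ : Pd * Q = 0)
    (hcomp : P * Pd + Q * Qd = 1)
    (e0 : Fin n → ℂ)
    (e : ℕ → Fin n → ℂ) (he : ∀ ℓ, e ℓ = (T ^ ℓ) *ᵥ e0)
    (Pgen : ℕ → Matrix (Fin n) (Fin nc) ℂ)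
    (hPgen0 : Pgen 0 = P)
    (hPgenS : ∀ ℓ : ℕ, Pgen (ℓ + 1) = Q * (Qd * T * Q) ^ ℓ * (Qd * T * P))
    (k : ℕ) :
    Pd *ᵥ e (k + 1) =
      (∑ ℓ ∈ Finset.range (k + 1),
        (Pd * T * Pgen ℓ) *ᵥ (Pd *ᵥ e (k - ℓ)))
      + (Pd * T * Q * (Qd * T * Q) ^ k) *ᵥ (Qd *ᵥ e0) := by
  have hstep : ∀ m : ℕ, e (m + 1) = T *ᵥ e m := by
    intro m
    rw [he, he, pow_succ', ← mulVec_mulVec]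
  have hsplit : ∀ v : Fin n → ℂ, v = P *ᵥ (Pd *ᵥ v) + Q *ᵥ (Qd *ᵥ v) := by
    intro v
    rw [mulVec_mulVec, mulVec_mulVec, ← add_mulVec, hcomp, one_mulVec]
  -- coarse/fine decomposition of one relaxation step, seen from a left matrix R
  have hdec : ∀ (p : ℕ) (R : Matrix (Fin p) (Fin n) ℂ) (v : Fin n → ℂ),
      (R * T) *ᵥ v = (R * T * P) *ᵥ (Pd *ᵥ v) + (R * T * Q) *ᵥ (Qd *ᵥ v) := by
    intro p R v
    conv_lhs => rw [hsplit v]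
    rw [mulVec_add, mulVec_mulVec (Pd *ᵥ v) (R * T) P, mulVec_mulVec (Qd *ᵥ v) (R * T) Q]
  have aux : ∀ m : ℕ, Qd *ᵥ e m =
      (∑ j ∈ Finset.range m,
        ((Qd * T * Q) ^ j * (Qd * T * P)) *ᵥ (Pd *ᵥ e (m - 1 - j)))
      + ((Qd * T * Q) ^ m) *ᵥ (Qd *ᵥ e0) := by
    intro m
    induction m with
    | zero => simp [he]
    | succ m ih =>
        rw [hstep, mulVec_mulVec, hdec nf Qd (e m), ih, mulVec_add, mulVec_sum']
        have key : ∀ j : ℕ,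
            (Qd * T * Q) *ᵥ (((Qd * T * Q) ^ j * (Qd * T * P)) *ᵥ (Pd *ᵥ e (m - 1 - j)))
            = ((Qd * T * Q) ^ (j + 1) * (Qd * T * P)) *ᵥ (Pd *ᵥ e (m - 1 - j)) := by
          intro j
          rw [mulVec_mulVec, pow_succ',
            Matrix.mul_assoc (Qd * T * Q) ((Qd * T * Q) ^ j) (Qd * T * P)]
        have tail : (Qd * T * Q) *ᵥ (((Qd * T * Q) ^ m) *ᵥ (Qd *ᵥ e0))
            = ((Qd * T * Q) ^ (m + 1)) *ᵥ (Qd *ᵥ e0) := by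
          rw [mulVec_mulVec, ← pow_succ']
        simp only [key, tail, Nat.add_sub_cancel]
        rw [Finset.sum_range_succ' (fun j =>
          ((Qd * T * Q) ^ j * (Qd * T * P)) *ᵥ (Pd *ᵥ e (m - j)))]
        have h2 : ∀ j : ℕ, m - (j + 1) = m - 1 - j := by intro j; omega
        have hsum2 : ∑ j ∈ Finset.range m,
            ((Qd * T * Q) ^ (j + 1) * (Qd * T * P)) *ᵥ (Pd *ᵥ e (m - (j + 1)))
            = ∑ j ∈ Finset.range m,
            ((Qd * T * Q) ^ (j + 1) * (Qd * T * P)) *ᵥ (Pd *ᵥ e (m - 1 - j)) :=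
          Finset.sum_congr rfl (fun j _ => by rw [h2])
        rw [hsum2, pow_zero, Matrix.one_mul, Nat.sub_zero]
        abel
  rw [hstep, mulVec_mulVec, hdec nc Pd (e k), aux k, mulVec_add, mulVec_sum']
  have key : ∀ j : ℕ,
      (Pd * T * Q) *ᵥ (((Qd * T * Q) ^ j * (Qd * T * P)) *ᵥ (Pd *ᵥ e (k - 1 - j)))
      = (Pd * T * (Q * (Qd * T * Q) ^ j * (Qd * T * P))) *ᵥ (Pd *ᵥ e (k - 1 - j)) := by
    intro j
    rw [mulVec_mulVec, ← Matrix.mul_assoc (Pd * T * Q) ((Qd * T * Q) ^ j) (Qd * T * P),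
      Matrix.mul_assoc (Pd * T) Q ((Qd * T * Q) ^ j),
      Matrix.mul_assoc (Pd * T) (Q * (Qd * T * Q) ^ j) (Qd * T * P)]
  have tail : (Pd * T * Q) *ᵥ (((Qd * T * Q) ^ k) *ᵥ (Qd *ᵥ e0))
      = (Pd * T * Q * (Qd * T * Q) ^ k) *ᵥ (Qd *ᵥ e0) := by
    rw [mulVec_mulVec]
  simp only [key, tail]
  rw [Finset.sum_range_succ' (fun ℓ => (Pd * T * Pgen ℓ) *ᵥ (Pd *ᵥ e (k - ℓ)))]
  have h4 : ∀ j : ℕ, k - (j + 1) = k - 1 - j := by intro j; omega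
  have hsum4 : ∑ j ∈ Finset.range k,
      (Pd * T * Pgen (j + 1)) *ᵥ (Pd *ᵥ e (k - (j + 1)))
      = ∑ j ∈ Finset.range k,
      (Pd * T * (Q * (Qd * T * Q) ^ j * (Qd * T * P))) *ᵥ (Pd *ᵥ e (k - 1 - j)) :=
    Finset.sum_congr rfl (fun j _ => by rw [h4, hPgenS])
  rw [hsum4, hPgen0, Nat.sub_zero]
  abel
end

section
/- Exact coarse residual equation: let R be any n_c×n matrix and define r̂^{(k)} := Â e^{(k)} and the noise term η^{(k)} := −RÂQ (Q†TQ)^k e_φ^{(0)}. Then for every k ≥ 0, Σ_{ℓ=0}^{k} (RÂP^{(ℓ)}) e_σ^{(k−ℓ)} = R r̂^{(k)} + η^{(k)}. -/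
open Matrix

/-- Exact coarse residual equation: for any `R`, with `r̂^{(k)} := Â e^{(k)}` and
noise `η^{(k)} := −RÂQ (Q†TQ)^k e_φ^{(0)}`,
`Σ_{ℓ=0}^{k} (RÂP^{(ℓ)}) e_σ^{(k−ℓ)} = R r̂^{(k)} + η^{(k)}`. -/
theorem exact_coarse_residual_equation
    (n nc nf : ℕ) (hn : 0 < n) (hnc : 0 < nc) (hnf : 0 < nf) (hsum : n = nc + nf)
    (Ahat : Matrix (Fin n) (Fin n) ℂ)
    (T : Matrix (Fin n) (Fin n) ℂ) (hT : T = 1 - Ahat)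
    (P : Matrix (Fin n) (Fin nc) ℂ) (Q : Matrix (Fin n) (Fin nf) ℂ)
    (Pd : Matrix (Fin nc) (Fin n) ℂ) (Qd : Matrix (Fin nf) (Fin n) ℂ)
    (hPdP : Pd * P = 1) (hQdQ : Qd * Q = 1) (hQdP : Qd * P = 0) (hPdQ : Pd * Q = 0)
    (hcomp : P * Pd + Q * Qd = 1)
    (e0 : Fin n → ℂ)
    (e : ℕ → Fin n → ℂ) (he : ∀ ℓ, e ℓ = (T ^ ℓ) *ᵥ e0)
    (Pgen : ℕ → Matrix (Fin n) (Fin nc) ℂ)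
    (hPgen0 : Pgen 0 = P)
    (hPgenS : ∀ ℓ : ℕ, Pgen (ℓ + 1) = Q * (Qd * T * Q) ^ ℓ * (Qd * T * P))
    (R : Matrix (Fin nc) (Fin n) ℂ)
    (rhat : ℕ → Fin n → ℂ) (hrhat : ∀ ℓ, rhat ℓ = Ahat *ᵥ e ℓ)
    (η : ℕ → Fin nc → ℂ)
    (hη : ∀ ℓ, η ℓ = -((R * Ahat * Q * (Qd * T * Q) ^ ℓ) *ᵥ (Qd *ᵥ e0)))
    (k : ℕ) :
    (∑ ℓ ∈ Finset.range (k + 1),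
        (R * Ahat * Pgen ℓ) *ᵥ (Pd *ᵥ e (k - ℓ)))
      = R *ᵥ rhat k + η k := by
  -- helper: mulVec commutes with finite sums of matrices
  have sum_mulVec : ∀ (s : Finset ℕ) (f : ℕ → Matrix (Fin nc) (Fin n) ℂ),
      (∑ i ∈ s, f i) *ᵥ e0 = ∑ i ∈ s, f i *ᵥ e0 := by
    intro s f
    induction s using Finset.induction with
    | empty => simp
    | insert _ _ h ih => rw [Finset.sum_insert h, Finset.sum_insert h, Matrix.add_mulVec, ih]
  -- Key matrix-level identity
  have key : ∀ m : ℕ, Qd * T ^ m =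
      (∑ ℓ ∈ Finset.range m,
          (Qd * T * Q) ^ (m - 1 - ℓ) * (Qd * T * P) * (Pd * T ^ ℓ))
        + (Qd * T * Q) ^ m * Qd := by
    intro m
    induction m with
    | zero => simp
    | succ m ih =>
      have hstep : Qd * T ^ (m + 1)
          = Qd * T * P * (Pd * T ^ m) + Qd * T * Q * (Qd * T ^ m) := by
        have h0 : Qd * T ^ (m + 1) = Qd * T * (P * Pd + Q * Qd) * T ^ m := by
          rw [hcomp, Matrix.mul_one, pow_succ', ← Matrix.mul_assoc]
        rw [h0]
        simp only [Matrix.mul_add, Matrix.add_mul, Matrix.mul_assoc]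
      rw [hstep, ih, Matrix.mul_add, Matrix.mul_sum, Finset.sum_range_succ]
      have hpow : ∀ ℓ ∈ Finset.range m,
          Qd * T * Q * ((Qd * T * Q) ^ (m - 1 - ℓ) * (Qd * T * P) * (Pd * T ^ ℓ))
            = (Qd * T * Q) ^ (m - ℓ) * (Qd * T * P) * (Pd * T ^ ℓ) := by
        intro ℓ hℓ
        rw [Finset.mem_range] at hℓ
        have h1 : m - ℓ = (m - 1 - ℓ) + 1 := by omega
        rw [h1, pow_succ']
        simp only [Matrix.mul_assoc]
      rw [Finset.sum_congr rfl hpow]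
      have h2 : ∀ ℓ ∈ Finset.range m,
          (Qd * T * Q) ^ (m + 1 - 1 - ℓ) * (Qd * T * P) * (Pd * T ^ ℓ)
            = (Qd * T * Q) ^ (m - ℓ) * (Qd * T * P) * (Pd * T ^ ℓ) := by
        intro ℓ hℓ
        rw [Finset.mem_range] at hℓ
        have h3 : m + 1 - 1 - ℓ = m - ℓ := by omega
        rw [h3]
      rw [Finset.sum_congr rfl h2]
      have h4 : m + 1 - 1 - m = 0 := by omega
      rw [h4, pow_zero, Matrix.one_mul, pow_succ']
      simp only [Matrix.mul_assoc]
      abel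
  -- Main matrix identity
  have main : ∑ ℓ ∈ Finset.range (k + 1), R * Ahat * Pgen ℓ * (Pd * T ^ (k - ℓ))
      = R * (Ahat * T ^ k) - R * Ahat * Q * (Qd * T * Q) ^ k * Qd := by
    rw [Finset.sum_range_succ']
    have hrefl : ∑ ℓ ∈ Finset.range k,
        R * Ahat * Pgen (ℓ + 1) * (Pd * T ^ (k - (ℓ + 1)))
        = ∑ ℓ ∈ Finset.range k,
          R * Ahat * Q * ((Qd * T * Q) ^ (k - 1 - ℓ) * (Qd * T * P) * (Pd * T ^ ℓ)) := by
      rw [← Finset.sum_range_reflect]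
      apply Finset.sum_congr rfl
      intro j hj
      rw [Finset.mem_range] at hj
      rw [hPgenS (k - 1 - j)]
      have h5 : k - (k - 1 - j + 1) = j := by omega
      rw [h5]
      simp only [Matrix.mul_assoc]
    rw [hrefl, hPgen0, ← Matrix.mul_sum]
    have hsum' : (∑ ℓ ∈ Finset.range k,
        (Qd * T * Q) ^ (k - 1 - ℓ) * (Qd * T * P) * (Pd * T ^ ℓ))
        = Qd * T ^ k - (Qd * T * Q) ^ k * Qd := by
      rw [key k]; abel
    rw [hsum', Nat.sub_zero]
    have hcompT : R * (Ahat * (P * (Pd * T ^ k))) + R * (Ahat * (Q * (Qd * T ^ k)))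
        = R * (Ahat * T ^ k) := by
      calc R * (Ahat * (P * (Pd * T ^ k))) + R * (Ahat * (Q * (Qd * T ^ k)))
          = R * Ahat * (P * Pd + Q * Qd) * T ^ k := by
            simp only [Matrix.mul_add, Matrix.add_mul, Matrix.mul_assoc]
        _ = R * (Ahat * T ^ k) := by rw [hcomp, Matrix.mul_one, Matrix.mul_assoc]
    simp only [Matrix.mul_sub, Matrix.mul_assoc] at hcompT ⊢
    rw [← hcompT]
    abel
  -- Conclude at the vector level
  simp only [he, hrhat, hη, mulVec_mulVec]
  rw [← sum_mulVec]
  have hfin : ∑ ℓ ∈ Finset.range (k + 1), R * Ahat * Pgen ℓ * (Pd * T ^ (k - ℓ))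
      = R * (Ahat * T ^ k) + -(R * Ahat * Q * (Qd * T * Q) ^ k * Qd) := by
    rw [main, sub_eq_add_neg]
  rw [hfin, Matrix.add_mulVec, Matrix.neg_mulVec]
end

section
/- Coarse solve as the dual projection: if R is an n_c×n matrix with RÂQ = 0 and RÂP invertible, then (RÂP)^{−1} R Â = P†, and consequently I − P (RÂP)^{−1} R Â = QQ†. -/
open Matrix

/-- Coarse solve as the dual projection: if `RÂQ = 0` and `RÂP` is invertible, then
`(RÂP)⁻¹ R Â = P†` and `I − P (RÂP)⁻¹ R Â = QQ†`. -/
theorem coarse_solve_dual_projection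
    (n nc nf : ℕ) (hn : 0 < n) (hnc : 0 < nc) (hnf : 0 < nf) (hsum : n = nc + nf)
    (Ahat : Matrix (Fin n) (Fin n) ℂ)
    (P : Matrix (Fin n) (Fin nc) ℂ) (Q : Matrix (Fin n) (Fin nf) ℂ)
    (Pd : Matrix (Fin nc) (Fin n) ℂ) (Qd : Matrix (Fin nf) (Fin n) ℂ)
    (hPdP : Pd * P = 1) (hQdQ : Qd * Q = 1) (hQdP : Qd * P = 0) (hPdQ : Pd * Q = 0)
    (hcomp : P * Pd + Q * Qd = 1)
    (R : Matrix (Fin nc) (Fin n) ℂ)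
    (hRQ : R * Ahat * Q = 0)
    (hinv : IsUnit (R * Ahat * P)) :
    (R * Ahat * P)⁻¹ * (R * Ahat) = Pd ∧
      1 - P * (R * Ahat * P)⁻¹ * R * Ahat = Q * Qd := by
  have hdet : IsUnit (R * Ahat * P).det := (Matrix.isUnit_iff_isUnit_det _).mp hinv
  have h1 : R * Ahat = (R * Ahat * P) * Pd := by
    calc R * Ahat = R * Ahat * (P * Pd + Q * Qd) := by rw [hcomp, Matrix.mul_one]
    _ = R * Ahat * (P * Pd) + R * Ahat * (Q * Qd) := by rw [Matrix.mul_add]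
    _ = (R * Ahat * P) * Pd := by
        rw [← Matrix.mul_assoc, ← Matrix.mul_assoc, hRQ, Matrix.zero_mul, add_zero]
  have key : (R * Ahat * P)⁻¹ * (R * Ahat) = Pd := by
    calc (R * Ahat * P)⁻¹ * (R * Ahat) = (R * Ahat * P)⁻¹ * ((R * Ahat * P) * Pd) := by
          rw [← h1]
    _ = Pd := by rw [← Matrix.mul_assoc, Matrix.nonsing_inv_mul _ hdet, Matrix.one_mul]
  refine ⟨key, ?_⟩
  have h2 : P * (R * Ahat * P)⁻¹ * R * Ahat = P * Pd := by
    rw [Matrix.mul_assoc, Matrix.mul_assoc, key]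
  rw [h2, ← hcomp, add_sub_cancel_left]
end

section
/- Exactness of the Markovian coarse solve under the orthogonality condition: let R be an n_c×n matrix with RÂP invertible and RÂQ = 0, define r̂^{(k)} := Â e^{(k)} and ε_σ^{(k)} := (RÂP)^{−1} R r̂^{(k)}. Then for every k ≥ 0 the coarse error components are recovered exactly, ε_σ^{(k)} = e_σ^{(k)}, and the remaining error is e^{(k)} − P ε_σ^{(k)} = Q Q† T^k e^{(0)}. -/
open Matrix

/-- Exactness of the Markovian coarse solve under the orthogonality condition `RÂQ = 0`:
the coarse error components are recovered exactly, `ε_σ^{(k)} = e_σ^{(k)}`, and the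
remaining error is `e^{(k)} − P ε_σ^{(k)} = Q Q† T^k e^{(0)}`. -/
theorem markovian_coarse_solve_exactness
    (n nc nf : ℕ) (hn : 0 < n) (hnc : 0 < nc) (hnf : 0 < nf) (hsum : n = nc + nf)
    (Ahat : Matrix (Fin n) (Fin n) ℂ)
    (T : Matrix (Fin n) (Fin n) ℂ) (hT : T = 1 - Ahat)
    (P : Matrix (Fin n) (Fin nc) ℂ) (Q : Matrix (Fin n) (Fin nf) ℂ)
    (Pd : Matrix (Fin nc) (Fin n) ℂ) (Qd : Matrix (Fin nf) (Fin n) ℂ)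
    (hPdP : Pd * P = 1) (hQdQ : Qd * Q = 1) (hQdP : Qd * P = 0) (hPdQ : Pd * Q = 0)
    (hcomp : P * Pd + Q * Qd = 1)
    (e0 : Fin n → ℂ)
    (e : ℕ → Fin n → ℂ) (he : ∀ ℓ, e ℓ = (T ^ ℓ) *ᵥ e0)
    (R : Matrix (Fin nc) (Fin n) ℂ)
    (hinv : IsUnit (R * Ahat * P))
    (hRQ : R * Ahat * Q = 0)
    (rhat : ℕ → Fin n → ℂ) (hrhat : ∀ ℓ, rhat ℓ = Ahat *ᵥ e ℓ)
    (εσ : ℕ → Fin nc → ℂ)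
    (hεσ : ∀ ℓ, εσ ℓ = (R * Ahat * P)⁻¹ *ᵥ (R *ᵥ rhat ℓ))
    (k : ℕ) :
    εσ k = Pd *ᵥ e k ∧
      e k - P *ᵥ εσ k = (Q * Qd * T ^ k) *ᵥ e0 := by
  have h1 : εσ k = Pd *ᵥ e k := by
    have key : R *ᵥ rhat k = (R * Ahat * P) *ᵥ (Pd *ᵥ e k) := by
      have : e k = (P * Pd) *ᵥ e k + (Q * Qd) *ᵥ e k := by
        rw [← add_mulVec, hcomp, one_mulVec]
      calc R *ᵥ rhat k = (R * Ahat) *ᵥ e k := by rw [hrhat, mulVec_mulVec]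
        _ = (R * Ahat) *ᵥ ((P * Pd) *ᵥ e k + (Q * Qd) *ᵥ e k) := by rw [← this]
        _ = (R * Ahat * P) *ᵥ (Pd *ᵥ e k) := by
            rw [mulVec_add, mulVec_mulVec, mulVec_mulVec, ← Matrix.mul_assoc,
              ← Matrix.mul_assoc, hRQ, Matrix.zero_mul, zero_mulVec, add_zero,
              ← mulVec_mulVec, Matrix.mul_assoc]
    rw [hεσ, key, mulVec_mulVec, Matrix.nonsing_inv_mul _ ((Matrix.isUnit_iff_isUnit_det _).mp hinv), one_mulVec]
  refine ⟨h1, ?_⟩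
  rw [h1]
  have : e k - P *ᵥ (Pd *ᵥ e k) = (Q * Qd) *ᵥ e k := by
    have := congrArg (· *ᵥ e k) hcomp
    simp only [add_mulVec, one_mulVec] at this
    rw [mulVec_mulVec]
    exact (eq_sub_of_add_eq' this).symm
  rw [this, he, mulVec_mulVec, Matrix.mul_assoc]
end

section
/- Semi-Markovian two-grid propagator is governed by compatible relaxation: let R be an n_c×n matrix with RÂQ = 0 and RÂP invertible, and define the memory-inclusive approximation ε^{(k)} := Σ_{ℓ=0}^{k} P^{(ℓ)} ( (RÂP)^{−1} R r̂^{(k)} + P† x^{(k)} − P† x^{(k−ℓ)} ). Then for every k ≥ 0, e^{(k)} − ε^{(k)} = Q (Q†TQ)^k Q† e^{(0)}. -/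
open Matrix

/-- Semi-Markovian two-grid propagator is governed by compatible relaxation:
with `RÂQ = 0`, `RÂP` invertible and the memory-inclusive approximation
`ε^{(k)} := Σ_{ℓ=0}^{k} P^{(ℓ)} ((RÂP)⁻¹ R r̂^{(k)} + P†x^{(k)} − P†x^{(k−ℓ)})`,
we have `e^{(k)} − ε^{(k)} = Q (Q†TQ)^k Q† e^{(0)}`. -/
theorem semi_markovian_two_grid_propagator
    (n nc nf : ℕ) (hn : 0 < n) (hnc : 0 < nc) (hnf : 0 < nf) (hsum : n = nc + nf)
    (A M : Matrix (Fin n) (Fin n) ℂ) (hA : IsUnit A)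
    (b : Fin n → ℂ) (x : Fin n → ℂ) (hx : x = A⁻¹ *ᵥ b)
    (xs : ℕ → Fin n → ℂ)
    (hxs : ∀ ℓ : ℕ, xs (ℓ + 1) = xs ℓ + M *ᵥ (b - A *ᵥ xs ℓ))
    (e : ℕ → Fin n → ℂ) (he : ∀ ℓ, e ℓ = x - xs ℓ)
    (Ahat : Matrix (Fin n) (Fin n) ℂ) (hAhat : Ahat = M * A)
    (T : Matrix (Fin n) (Fin n) ℂ) (hT : T = 1 - Ahat)
    (rhat : ℕ → Fin n → ℂ) (hrhat : ∀ ℓ, rhat ℓ = xs (ℓ + 1) - xs ℓ)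
    (P : Matrix (Fin n) (Fin nc) ℂ) (Q : Matrix (Fin n) (Fin nf) ℂ)
    (Pd : Matrix (Fin nc) (Fin n) ℂ) (Qd : Matrix (Fin nf) (Fin n) ℂ)
    (hPdP : Pd * P = 1) (hQdQ : Qd * Q = 1) (hQdP : Qd * P = 0) (hPdQ : Pd * Q = 0)
    (hcomp : P * Pd + Q * Qd = 1)
    (Pgen : ℕ → Matrix (Fin n) (Fin nc) ℂ)
    (hPgen0 : Pgen 0 = P)
    (hPgenS : ∀ ℓ : ℕ, Pgen (ℓ + 1) = Q * (Qd * T * Q) ^ ℓ * (Qd * T * P))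
    (R : Matrix (Fin nc) (Fin n) ℂ)
    (hRQ : R * Ahat * Q = 0)
    (hinv : IsUnit (R * Ahat * P))
    (k : ℕ)
    (ε : Fin n → ℂ)
    (hε : ε = ∑ ℓ ∈ Finset.range (k + 1),
        Pgen ℓ *ᵥ ((R * Ahat * P)⁻¹ *ᵥ (R *ᵥ rhat k)
          + Pd *ᵥ xs k - Pd *ᵥ xs (k - ℓ))) :
    e k - ε = (Q * (Qd * T * Q) ^ k * Qd) *ᵥ e 0 := by
  -- basic facts
  have hb : A *ᵥ x = b := by
    rw [hx, mulVec_mulVec, Matrix.mul_nonsing_inv A ((Matrix.isUnit_iff_isUnit_det A).mp hA),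
      one_mulVec]
  -- error recurrence
  have hstep : ∀ ℓ, e (ℓ + 1) = T *ᵥ e ℓ := by
    intro ℓ
    have : b - A *ᵥ xs ℓ = A *ᵥ e ℓ := by rw [he, mulVec_sub, hb]
    rw [he, hxs, this, he ℓ, hT, sub_mulVec, one_mulVec, hAhat, ← mulVec_mulVec]
    abel
  -- rhat k = Ahat *ᵥ e k
  have hrA : rhat k = Ahat *ᵥ e k := by
    have : b - A *ᵥ xs k = A *ᵥ e k := by rw [he, mulVec_sub, hb]
    rw [hrhat, hxs, this, mulVec_mulVec, ← hAhat]
    abel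
  -- (RÂP)⁻¹ R r̂^{(k)} = Pd e^{(k)}
  have hcoarse : (R * Ahat * P)⁻¹ *ᵥ (R *ᵥ rhat k) = Pd *ᵥ e k := by
    have h1 : R *ᵥ rhat k = (R * Ahat * P) *ᵥ (Pd *ᵥ e k) := by
      have hcompv : (P * Pd) *ᵥ e k + (Q * Qd) *ᵥ e k = e k := by
        rw [← add_mulVec, hcomp, one_mulVec]
      calc R *ᵥ rhat k = (R * Ahat) *ᵥ e k := by rw [hrA, mulVec_mulVec]
        _ = (R * Ahat) *ᵥ ((P * Pd) *ᵥ e k + (Q * Qd) *ᵥ e k) := by rw [hcompv]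
        _ = (R * Ahat * (P * Pd)) *ᵥ e k + (R * Ahat * (Q * Qd)) *ᵥ e k := by
              rw [mulVec_add, mulVec_mulVec, mulVec_mulVec]
        _ = (R * Ahat * P) *ᵥ (Pd *ᵥ e k) := by
              rw [← Matrix.mul_assoc (R * Ahat) Q Qd, hRQ, Matrix.zero_mul, zero_mulVec,
                add_zero, ← Matrix.mul_assoc, mulVec_mulVec]
    rw [h1, mulVec_mulVec,
      Matrix.nonsing_inv_mul _ ((Matrix.isUnit_iff_isUnit_det _).mp hinv), one_mulVec]
  -- each term of ε
  have hterm : ∀ ℓ, (R * Ahat * P)⁻¹ *ᵥ (R *ᵥ rhat k) + Pd *ᵥ xs k - Pd *ᵥ xs (k - ℓ)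
      = Pd *ᵥ e (k - ℓ) := by
    intro ℓ
    rw [hcoarse, he, he, mulVec_sub, mulVec_sub]
    abel
  have hε' : ε = ∑ ℓ ∈ Finset.range (k + 1), Pgen ℓ *ᵥ (Pd *ᵥ e (k - ℓ)) := by
    rw [hε]; exact Finset.sum_congr rfl fun ℓ _ => by rw [hterm]
  rw [hε']
  -- helper lemmas
  have hcancel : ∀ (p : ℕ) (X : Matrix (Fin nf) (Fin p) ℂ), Qd * (Q * X) = X := by
    intro p X; rw [← Matrix.mul_assoc, hQdQ, Matrix.one_mul]
  have hQQd : ∀ v : Fin n → ℂ, (Q * Qd) *ᵥ v = v - (P * Pd) *ᵥ v := by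
    intro v
    have h : (P * Pd) *ᵥ v + (Q * Qd) *ᵥ v = v := by rw [← add_mulVec, hcomp, one_mulVec]
    exact eq_sub_of_add_eq' h
  -- the key identity, by induction on k
  clear hε hε' hterm hcoarse hrA hrhat rhat hxs hx hb hA b hsum hn hnc hnf ε
  induction k with
  | zero =>
      simp only [zero_add, Finset.sum_range_one, Nat.sub_self, hPgen0, pow_zero,
        Matrix.mul_one, hQQd, mulVec_mulVec]
  | succ m ih =>
      set C' := Qd * T * Q with hC'
      set C := Q * C' * Qd with hC
      have hCP : ∀ ℓ, C * Pgen (ℓ + 1) = Pgen (ℓ + 2) := by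
        intro ℓ
        rw [hPgenS, hPgenS, hC]
        simp only [Matrix.mul_assoc, hcancel, pow_succ']
      have hCP0 : C * Pgen 0 = 0 := by
        rw [hPgen0, hC, Matrix.mul_assoc, hQdP, Matrix.mul_zero]
      have hCsum : C *ᵥ (∑ ℓ ∈ Finset.range (m + 1), Pgen ℓ *ᵥ (Pd *ᵥ e (m - ℓ)))
          = ∑ ℓ ∈ Finset.range (m + 1), (C * Pgen ℓ) *ᵥ (Pd *ᵥ e (m - ℓ)) := by
        rw [show C *ᵥ (∑ ℓ ∈ Finset.range (m + 1), Pgen ℓ *ᵥ (Pd *ᵥ e (m - ℓ)))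
            = ∑ ℓ ∈ Finset.range (m + 1), C *ᵥ (Pgen ℓ *ᵥ (Pd *ᵥ e (m - ℓ))) from
          map_sum (Matrix.mulVecLin C) _ _]
        exact Finset.sum_congr rfl fun ℓ _ => by rw [mulVec_mulVec]
      -- rewrite the sum at m+1
      have hterm2 : ∀ ℓ ∈ Finset.range (m + 1),
          Pgen (ℓ + 1) *ᵥ (Pd *ᵥ e (m + 1 - (ℓ + 1)))
            = (C * Pgen ℓ) *ᵥ (Pd *ᵥ e (m - ℓ))
              + (if ℓ = 0 then Pgen 1 *ᵥ (Pd *ᵥ e m) else 0) := by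
        intro ℓ _
        cases ℓ with
        | zero => simp [hCP0]
        | succ j => simp [hCP j, Nat.succ_sub_succ]
      have hsplit : ∑ ℓ ∈ Finset.range (m + 2), Pgen ℓ *ᵥ (Pd *ᵥ e (m + 1 - ℓ))
          = Pgen 0 *ᵥ (Pd *ᵥ e (m + 1)) + Pgen 1 *ᵥ (Pd *ᵥ e m)
            + C *ᵥ (∑ ℓ ∈ Finset.range (m + 1), Pgen ℓ *ᵥ (Pd *ᵥ e (m - ℓ))) := by
        rw [Finset.sum_range_succ' _ (m + 1), Finset.sum_congr rfl hterm2,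
          Finset.sum_add_distrib, Finset.sum_ite_eq' (Finset.range (m + 1)) 0, hCsum]
        simp only [Finset.mem_range, Nat.succ_pos, if_pos, Nat.sub_zero]
        abel
      rw [hsplit]
      -- LHS simplification
      have hmat : Q * Qd * T = Pgen 1 * Pd + C := by
        rw [hPgenS 0, pow_zero, Matrix.mul_one, hC, hC']
        have h : Q * Qd * T = Q * Qd * T * (P * Pd + Q * Qd) := by
          rw [hcomp, Matrix.mul_one]
        rw [h, Matrix.mul_add]
        simp only [Matrix.mul_assoc]
      have h2 : (Q * Qd) *ᵥ e (m + 1) = Pgen 1 *ᵥ (Pd *ᵥ e m) + C *ᵥ e m := by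
        rw [hstep m, mulVec_mulVec, hmat, add_mulVec, ← mulVec_mulVec]
      have hkey : e (m + 1) - Pgen 0 *ᵥ (Pd *ᵥ e (m + 1)) - Pgen 1 *ᵥ (Pd *ᵥ e m)
          = C *ᵥ e m := by
        have h1 : e (m + 1) - Pgen 0 *ᵥ (Pd *ᵥ e (m + 1)) = (Q * Qd) *ᵥ e (m + 1) := by
          rw [hQQd, hPgen0, mulVec_mulVec]
        rw [h1, h2]; abel
      calc e (m + 1) - (Pgen 0 *ᵥ (Pd *ᵥ e (m + 1)) + Pgen 1 *ᵥ (Pd *ᵥ e m)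
              + C *ᵥ (∑ ℓ ∈ Finset.range (m + 1), Pgen ℓ *ᵥ (Pd *ᵥ e (m - ℓ))))
          = (e (m + 1) - Pgen 0 *ᵥ (Pd *ᵥ e (m + 1)) - Pgen 1 *ᵥ (Pd *ᵥ e m))
              - C *ᵥ (∑ ℓ ∈ Finset.range (m + 1), Pgen ℓ *ᵥ (Pd *ᵥ e (m - ℓ))) := by abel
        _ = C *ᵥ (e m - ∑ ℓ ∈ Finset.range (m + 1), Pgen ℓ *ᵥ (Pd *ᵥ e (m - ℓ))) := by
            rw [hkey, mulVec_sub]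
        _ = C *ᵥ ((Q * C' ^ m * Qd) *ᵥ e 0) := by rw [ih]
        _ = (Q * C' ^ (m + 1) * Qd) *ᵥ e 0 := by
            rw [mulVec_mulVec]
            congr 1
            simp only [hC, Matrix.mul_assoc, hcancel, pow_succ']
end

section
/- Non-Markovian two-grid error propagator: let R be an n_c×n matrix, let P' := Σ_{ℓ=0}^{k} P^{(ℓ)} and A_σ := R Â P', and assume A_σ is invertible. Define the memory correction s_σ^{(k)} := −Σ_{ℓ=0}^{k} (RÂP^{(ℓ)}) (P† x^{(k)} − P† x^{(k−ℓ)}), the coarse solution ε_σ^{(k)} := A_σ^{−1} (R r̂^{(k)} + s_σ^{(k)}), and the approximation ε^{(k)} := Σ_{ℓ=0}^{k} P^{(ℓ)} ( ε_σ^{(k)} + P† x^{(k)} − P† x^{(k−ℓ)} ). Then e^{(k)} − ε^{(k)} = (I − P' A_σ^{−1} R Â) Q (Q†TQ)^k Q† e^{(0)}. -/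
open Matrix

lemma aux_sum_mulVec {m n : Type*} [Fintype n] {ι : Type*} (s : Finset ι)
    (f : ι → Matrix m n ℂ) (v : n → ℂ) :
    (∑ i ∈ s, f i) *ᵥ v = ∑ i ∈ s, f i *ᵥ v := by
  induction s using Finset.cons_induction with
  | empty => simp [Matrix.zero_mulVec]
  | cons a s ha ih => simp [Finset.sum_cons, Matrix.add_mulVec, ih]

lemma aux_mulVec_sumv {m n : Type*} [Fintype n] {ι : Type*} (s : Finset ι)
    (M : Matrix m n ℂ) (f : ι → n → ℂ) :
    M *ᵥ (∑ i ∈ s, f i) = ∑ i ∈ s, M *ᵥ f i := by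
  induction s using Finset.cons_induction with
  | empty => simp
  | cons a s ha ih => simp [Finset.sum_cons, Matrix.mulVec_add, ih]

/-- Non-Markovian two-grid error propagator: with `P' := Σ_{ℓ=0}^{k} P^{(ℓ)}`,
`A_σ := RÂP'` invertible, memory correction
`s_σ^{(k)} := −Σ_{ℓ=0}^{k} (RÂP^{(ℓ)})(P†x^{(k)} − P†x^{(k−ℓ)})`,
coarse solution `ε_σ^{(k)} := A_σ⁻¹ (R r̂^{(k)} + s_σ^{(k)})`, and
`ε^{(k)} := Σ_{ℓ=0}^{k} P^{(ℓ)} (ε_σ^{(k)} + P†x^{(k)} − P†x^{(k−ℓ)})`,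
we have `e^{(k)} − ε^{(k)} = (I − P' A_σ⁻¹ R Â) Q (Q†TQ)^k Q† e^{(0)}`. -/
theorem non_markovian_two_grid_propagator
    (n nc nf : ℕ) (hn : 0 < n) (hnc : 0 < nc) (hnf : 0 < nf) (hsum : n = nc + nf)
    (A M : Matrix (Fin n) (Fin n) ℂ) (hA : IsUnit A)
    (b : Fin n → ℂ) (x : Fin n → ℂ) (hx : x = A⁻¹ *ᵥ b)
    (xs : ℕ → Fin n → ℂ)
    (hxs : ∀ ℓ : ℕ, xs (ℓ + 1) = xs ℓ + M *ᵥ (b - A *ᵥ xs ℓ))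
    (e : ℕ → Fin n → ℂ) (he : ∀ ℓ, e ℓ = x - xs ℓ)
    (Ahat : Matrix (Fin n) (Fin n) ℂ) (hAhat : Ahat = M * A)
    (T : Matrix (Fin n) (Fin n) ℂ) (hT : T = 1 - Ahat)
    (rhat : ℕ → Fin n → ℂ) (hrhat : ∀ ℓ, rhat ℓ = xs (ℓ + 1) - xs ℓ)
    (P : Matrix (Fin n) (Fin nc) ℂ) (Q : Matrix (Fin n) (Fin nf) ℂ)
    (Pd : Matrix (Fin nc) (Fin n) ℂ) (Qd : Matrix (Fin nf) (Fin n) ℂ)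
    (hPdP : Pd * P = 1) (hQdQ : Qd * Q = 1) (hQdP : Qd * P = 0) (hPdQ : Pd * Q = 0)
    (hcomp : P * Pd + Q * Qd = 1)
    (Pgen : ℕ → Matrix (Fin n) (Fin nc) ℂ)
    (hPgen0 : Pgen 0 = P)
    (hPgenS : ∀ ℓ : ℕ, Pgen (ℓ + 1) = Q * (Qd * T * Q) ^ ℓ * (Qd * T * P))
    (R : Matrix (Fin nc) (Fin n) ℂ)
    (k : ℕ)
    (P' : Matrix (Fin n) (Fin nc) ℂ)
    (hP' : P' = ∑ ℓ ∈ Finset.range (k + 1), Pgen ℓ)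
    (Aσ : Matrix (Fin nc) (Fin nc) ℂ) (hAσ : Aσ = R * Ahat * P')
    (hAσinv : IsUnit Aσ)
    (sσ : Fin nc → ℂ)
    (hsσ : sσ = -∑ ℓ ∈ Finset.range (k + 1),
        (R * Ahat * Pgen ℓ) *ᵥ (Pd *ᵥ xs k - Pd *ᵥ xs (k - ℓ)))
    (εσ : Fin nc → ℂ) (hεσ : εσ = Aσ⁻¹ *ᵥ (R *ᵥ rhat k + sσ))
    (ε : Fin n → ℂ)
    (hε : ε = ∑ ℓ ∈ Finset.range (k + 1),
        Pgen ℓ *ᵥ (εσ + Pd *ᵥ xs k - Pd *ᵥ xs (k - ℓ))) :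
    e k - ε = ((1 - P' * Aσ⁻¹ * R * Ahat) * Q * (Qd * T * Q) ^ k * Qd) *ᵥ e 0 := by
  have hAdet : IsUnit A.det := (Matrix.isUnit_iff_isUnit_det A).mp hA
  have hAx : A *ᵥ x = b := by
    rw [hx, mulVec_mulVec, Matrix.mul_nonsing_inv A hAdet, one_mulVec]
  -- error propagation
  have heT : ∀ ℓ, e (ℓ + 1) = T *ᵥ e ℓ := by
    intro ℓ
    have hb : b - A *ᵥ xs ℓ = A *ᵥ (x - xs ℓ) := by rw [mulVec_sub, hAx]
    rw [he, he, hxs, hb, hT, hAhat, sub_mulVec, one_mulVec,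
      ← mulVec_mulVec (x - xs ℓ) M A]
    abel
  -- shifted residual
  have hrhatAe : rhat k = Ahat *ᵥ e k := by
    have h1 : rhat k = e k - e (k + 1) := by
      rw [hrhat, he, he]; abel
    rw [h1, heT, hT, sub_mulVec, one_mulVec]
    abel
  -- key induction on the fine-level component
  have keyQ : ∀ m : ℕ, Qd *ᵥ e m =
      (∑ ℓ ∈ Finset.range m, ((Qd * T * Q) ^ ℓ * (Qd * T * P)) *ᵥ (Pd *ᵥ e (m - 1 - ℓ)))
        + (Qd * T * Q) ^ m *ᵥ (Qd *ᵥ e 0) := by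
    intro m
    induction m with
    | zero => simp
    | succ m ih =>
      have hQdT : Qd * T = Qd * T * P * Pd + Qd * T * Q * Qd := by
        calc Qd * T = Qd * T * (P * Pd + Q * Qd) := by rw [hcomp, Matrix.mul_one]
          _ = Qd * T * P * Pd + Qd * T * Q * Qd := by
              rw [Matrix.mul_add, ← Matrix.mul_assoc, ← Matrix.mul_assoc]
      have hsplit : Qd *ᵥ e (m + 1)
          = (Qd * T * P) *ᵥ (Pd *ᵥ e m) + (Qd * T * Q) *ᵥ (Qd *ᵥ e m) := by
        have h2 : (Qd * T * P) *ᵥ (Pd *ᵥ e m) + (Qd * T * Q) *ᵥ (Qd *ᵥ e m)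
            = (Qd * T) *ᵥ e m := by
          rw [mulVec_mulVec (e m) (Qd * T * P) Pd, mulVec_mulVec (e m) (Qd * T * Q) Qd,
            ← add_mulVec, ← hQdT]
        rw [heT, mulVec_mulVec (e m) Qd T, h2]
      have hstep : ∀ (i : ℕ) (w : Fin nc → ℂ),
          (Qd * T * Q) *ᵥ (((Qd * T * Q) ^ i * (Qd * T * P)) *ᵥ w)
            = ((Qd * T * Q) ^ (i + 1) * (Qd * T * P)) *ᵥ w := by
        intro i w
        rw [mulVec_mulVec w (Qd * T * Q) ((Qd * T * Q) ^ i * (Qd * T * P)),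
          ← Matrix.mul_assoc, ← pow_succ']
      have hstep0 : (Qd * T * Q) *ᵥ ((Qd * T * Q) ^ m *ᵥ (Qd *ᵥ e 0))
          = (Qd * T * Q) ^ (m + 1) *ᵥ (Qd *ᵥ e 0) := by
        rw [mulVec_mulVec (Qd *ᵥ e 0) (Qd * T * Q) ((Qd * T * Q) ^ m), ← pow_succ']
      calc Qd *ᵥ e (m + 1)
          = (Qd * T * P) *ᵥ (Pd *ᵥ e m) + (Qd * T * Q) *ᵥ (Qd *ᵥ e m) := hsplit
        _ = (Qd * T * P) *ᵥ (Pd *ᵥ e m)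
            + ((∑ i ∈ Finset.range m,
                ((Qd * T * Q) ^ (i + 1) * (Qd * T * P)) *ᵥ (Pd *ᵥ e (m - 1 - i)))
              + (Qd * T * Q) ^ (m + 1) *ᵥ (Qd *ᵥ e 0)) := by
            rw [ih, mulVec_add, aux_mulVec_sumv, hstep0]
            congr 1
            congr 1
            exact Finset.sum_congr rfl fun i _ => hstep i _
        _ = (∑ ℓ ∈ Finset.range (m + 1),
              ((Qd * T * Q) ^ ℓ * (Qd * T * P)) *ᵥ (Pd *ᵥ e (m + 1 - 1 - ℓ)))
            + (Qd * T * Q) ^ (m + 1) *ᵥ (Qd *ᵥ e 0) := by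
            rw [Finset.sum_range_succ']
            have hidx : ∀ i ∈ Finset.range m,
                ((Qd * T * Q) ^ (i + 1) * (Qd * T * P)) *ᵥ (Pd *ᵥ e (m + 1 - 1 - (i + 1)))
                  = ((Qd * T * Q) ^ (i + 1) * (Qd * T * P)) *ᵥ (Pd *ᵥ e (m - 1 - i)) := by
              intro i _
              have h : m + 1 - 1 - (i + 1) = m - 1 - i := by omega
              rw [h]
            rw [Finset.sum_congr rfl hidx]
            simp only [pow_zero, Matrix.one_mul, Nat.sub_zero, Nat.add_sub_cancel]
            abel
  -- full decomposition of e k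
  have hek : e k = (∑ ℓ ∈ Finset.range (k + 1), Pgen ℓ *ᵥ (Pd *ᵥ e (k - ℓ)))
      + (Q * (Qd * T * Q) ^ k * Qd) *ᵥ e 0 := by
    have h0 : e k = P *ᵥ (Pd *ᵥ e k) + Q *ᵥ (Qd *ᵥ e k) := by
      rw [mulVec_mulVec (e k) P Pd, mulVec_mulVec (e k) Q Qd, ← add_mulVec, hcomp,
        one_mulVec]
    calc e k = P *ᵥ (Pd *ᵥ e k) + Q *ᵥ (Qd *ᵥ e k) := h0
      _ = P *ᵥ (Pd *ᵥ e k)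
          + ((∑ ℓ ∈ Finset.range k,
              (Q * ((Qd * T * Q) ^ ℓ * (Qd * T * P))) *ᵥ (Pd *ᵥ e (k - 1 - ℓ)))
            + (Q * (Qd * T * Q) ^ k * Qd) *ᵥ e 0) := by
          rw [keyQ k, mulVec_add, aux_mulVec_sumv]
          congr 1
          congr 1
          · exact Finset.sum_congr rfl fun ℓ _ =>
              mulVec_mulVec (Pd *ᵥ e (k - 1 - ℓ)) Q ((Qd * T * Q) ^ ℓ * (Qd * T * P))
          · rw [mulVec_mulVec (e 0) ((Qd * T * Q) ^ k) Qd,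
              mulVec_mulVec (e 0) Q ((Qd * T * Q) ^ k * Qd), ← Matrix.mul_assoc]
      _ = (∑ ℓ ∈ Finset.range (k + 1), Pgen ℓ *ᵥ (Pd *ᵥ e (k - ℓ)))
          + (Q * (Qd * T * Q) ^ k * Qd) *ᵥ e 0 := by
          rw [Finset.sum_range_succ']
          simp only [hPgenS, hPgen0, Nat.sub_zero]
          have hidx : ∀ i ∈ Finset.range k,
              (Q * (Qd * T * Q) ^ i * (Qd * T * P)) *ᵥ (Pd *ᵥ e (k - (i + 1)))
                = (Q * ((Qd * T * Q) ^ i * (Qd * T * P))) *ᵥ (Pd *ᵥ e (k - 1 - i)) := by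
            intro i _
            have h : k - (i + 1) = k - 1 - i := by omega
            rw [Matrix.mul_assoc, h]
          rw [Finset.sum_congr rfl hidx]
          abel
  set v : Fin n → ℂ := (Q * (Qd * T * Q) ^ k * Qd) *ᵥ e 0 with hv
  set S : Fin n → ℂ :=
    ∑ ℓ ∈ Finset.range (k + 1), Pgen ℓ *ᵥ (Pd *ᵥ xs k - Pd *ᵥ xs (k - ℓ)) with hS
  -- split each coarse component
  have hterm : ∀ ℓ, Pgen ℓ *ᵥ (Pd *ᵥ e (k - ℓ))
      = Pgen ℓ *ᵥ (Pd *ᵥ e k) + Pgen ℓ *ᵥ (Pd *ᵥ xs k - Pd *ᵥ xs (k - ℓ)) := by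
    intro ℓ
    have h : Pd *ᵥ e (k - ℓ) = Pd *ᵥ e k + (Pd *ᵥ xs k - Pd *ᵥ xs (k - ℓ)) := by
      rw [he, he, mulVec_sub, mulVec_sub]
      abel
    rw [h, mulVec_add]
  have hk2 : e k - S = P' *ᵥ (Pd *ᵥ e k) + v := by
    have h1 : e k = (∑ ℓ ∈ Finset.range (k + 1),
        (Pgen ℓ *ᵥ (Pd *ᵥ e k) + Pgen ℓ *ᵥ (Pd *ᵥ xs k - Pd *ᵥ xs (k - ℓ)))) + v := by
      conv_lhs => rw [hek]
      rw [Finset.sum_congr rfl fun ℓ _ => hterm ℓ]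
    conv_lhs => rw [h1]
    rw [Finset.sum_add_distrib, hP', aux_sum_mulVec, ← hS]
    abel
  -- memory correction
  have hsσ2 : sσ = -((R * Ahat) *ᵥ S) := by
    rw [hsσ, hS, aux_mulVec_sumv]
    congr 1
    exact Finset.sum_congr rfl fun ℓ _ =>
      (mulVec_mulVec (Pd *ᵥ xs k - Pd *ᵥ xs (k - ℓ)) (R * Ahat) (Pgen ℓ)).symm
  -- coarse solution
  have hAσdet : IsUnit Aσ.det := (Matrix.isUnit_iff_isUnit_det Aσ).mp hAσinv
  have hεσ2 : εσ = Pd *ᵥ e k + Aσ⁻¹ *ᵥ ((R * Ahat) *ᵥ v) := by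
    have h1 : R *ᵥ rhat k + sσ = (R * Ahat) *ᵥ (e k - S) := by
      rw [hrhatAe, hsσ2, mulVec_sub, mulVec_mulVec (e k) R Ahat]
      abel
    have h2 : (R * Ahat) *ᵥ (e k - S) = Aσ *ᵥ (Pd *ᵥ e k) + (R * Ahat) *ᵥ v := by
      rw [hk2, mulVec_add, hAσ, mulVec_mulVec (Pd *ᵥ e k) (R * Ahat) P']
    rw [hεσ, h1, h2, mulVec_add, mulVec_mulVec (Pd *ᵥ e k) Aσ⁻¹ Aσ,
      Matrix.nonsing_inv_mul Aσ hAσdet, one_mulVec]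
  -- approximation
  have hε2 : ε = P' *ᵥ εσ + S := by
    rw [hε, hS, hP', aux_sum_mulVec, ← Finset.sum_add_distrib]
    refine Finset.sum_congr rfl fun ℓ _ => ?_
    rw [← mulVec_add]
    congr 1
    abel
  -- conclude
  have hY : P' *ᵥ (Aσ⁻¹ *ᵥ ((R * Ahat) *ᵥ v)) = (P' * Aσ⁻¹ * R * Ahat) *ᵥ v := by
    rw [mulVec_mulVec ((R * Ahat) *ᵥ v) P' Aσ⁻¹, mulVec_mulVec v (P' * Aσ⁻¹) (R * Ahat),
      Matrix.mul_assoc (P' * Aσ⁻¹) R Ahat]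
  have hRHS : ((1 - P' * Aσ⁻¹ * R * Ahat) * Q * (Qd * T * Q) ^ k * Qd) *ᵥ e 0
      = v - (P' * Aσ⁻¹ * R * Ahat) *ᵥ v := by
    have hm : (1 - P' * Aσ⁻¹ * R * Ahat) * Q * (Qd * T * Q) ^ k * Qd
        = Q * (Qd * T * Q) ^ k * Qd
          - (P' * Aσ⁻¹ * R * Ahat) * (Q * (Qd * T * Q) ^ k * Qd) := by
        rw [Matrix.sub_mul, Matrix.sub_mul, Matrix.sub_mul, Matrix.one_mul,
          Matrix.mul_assoc (P' * Aσ⁻¹ * R * Ahat) Q ((Qd * T * Q) ^ k),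
          Matrix.mul_assoc (P' * Aσ⁻¹ * R * Ahat) (Q * (Qd * T * Q) ^ k) Qd]
    rw [hm, sub_mulVec, ← mulVec_mulVec (e 0) (P' * Aσ⁻¹ * R * Ahat)
      (Q * (Qd * T * Q) ^ k * Qd), ← hv]
  rw [hε2, hεσ2, hRHS, mulVec_add, hY]
  calc e k - (P' *ᵥ (Pd *ᵥ e k) + (P' * Aσ⁻¹ * R * Ahat) *ᵥ v + S)
      = (e k - S) - P' *ᵥ (Pd *ᵥ e k) - (P' * Aσ⁻¹ * R * Ahat) *ᵥ v := by abel
    _ = (P' *ᵥ (Pd *ᵥ e k) + v) - P' *ᵥ (Pd *ᵥ e k) - (P' * Aσ⁻¹ * R * Ahat) *ᵥ v := by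
        rw [hk2]
    _ = v - (P' * Aσ⁻¹ * R * Ahat) *ᵥ v := by abel
end

section
/- Petrov–Galerkin form of the exact coarse operator: let k ≥ 1 and assume Q†ÂQ and I − (Q†TQ)^k are invertible. Then for any n_c×n matrix R, RÂ ( P + Q (I − (Q†TQ)^k)^{−1} Σ_{ℓ=0}^{k−1} (Q†TQ)^ℓ (Q†TP) ) = RÂ ( I − Q (Q†ÂQ)^{−1} Q†Â ) P = R ( Â − ÂQ (Q†ÂQ)^{−1} Q†Â ) P. -/
open Matrix

/-- Petrov–Galerkin form of the exact coarse operator: for `k ≥ 1`, with `Q†ÂQ` and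
`I − (Q†TQ)^k` invertible, for any `R`,
`RÂ (P + Q (I − (Q†TQ)^k)⁻¹ Σ_{ℓ=0}^{k−1} (Q†TQ)^ℓ (Q†TP))
  = RÂ (I − Q (Q†ÂQ)⁻¹ Q†Â) P = R (Â − ÂQ (Q†ÂQ)⁻¹ Q†Â) P`. -/
theorem petrov_galerkin_exact_coarse_operator
    (n nc nf : ℕ) (hn : 0 < n) (hnc : 0 < nc) (hnf : 0 < nf) (hsum : n = nc + nf)
    (Ahat : Matrix (Fin n) (Fin n) ℂ)
    (T : Matrix (Fin n) (Fin n) ℂ) (hT : T = 1 - Ahat)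
    (P : Matrix (Fin n) (Fin nc) ℂ) (Q : Matrix (Fin n) (Fin nf) ℂ)
    (Pd : Matrix (Fin nc) (Fin n) ℂ) (Qd : Matrix (Fin nf) (Fin n) ℂ)
    (hPdP : Pd * P = 1) (hQdQ : Qd * Q = 1) (hQdP : Qd * P = 0) (hPdQ : Pd * Q = 0)
    (hcomp : P * Pd + Q * Qd = 1)
    (k : ℕ) (hk : 1 ≤ k)
    (hinvA : IsUnit (Qd * Ahat * Q))
    (hinvT : IsUnit (1 - (Qd * T * Q) ^ k))
    (R : Matrix (Fin nc) (Fin n) ℂ) :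
    R * Ahat * (P + Q * ((1 - (Qd * T * Q) ^ k)⁻¹ *
        (∑ ℓ ∈ Finset.range k, (Qd * T * Q) ^ ℓ) * (Qd * T * P)))
      = R * Ahat * ((1 - Q * (Qd * Ahat * Q)⁻¹ * (Qd * Ahat)) * P) ∧
    R * Ahat * ((1 - Q * (Qd * Ahat * Q)⁻¹ * (Qd * Ahat)) * P)
      = R * (Ahat - Ahat * Q * (Qd * Ahat * Q)⁻¹ * (Qd * Ahat)) * P := by
  set B := Qd * T * Q with hBdef
  have hB : Qd * Ahat * Q = 1 - B := by
    rw [hBdef, hT]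
    rw [Matrix.mul_sub, Matrix.sub_mul, Matrix.mul_one, hQdQ]
    abel
  have hU1 : IsUnit (1 - B) := hB ▸ hinvA
  have hgeom : (∑ ℓ ∈ Finset.range k, B ^ ℓ) * (1 - B) = 1 - B ^ k := by
    have := geom_sum_mul B k
    have h2 : (∑ ℓ ∈ Finset.range k, B ^ ℓ) * (1 - B)
        = -((∑ ℓ ∈ Finset.range k, B ^ ℓ) * (B - 1)) := by
      rw [Matrix.mul_sub, Matrix.mul_sub]; simp
    rw [h2, this]; abel
  have hdet1 : IsUnit (1 - B).det := (Matrix.isUnit_iff_isUnit_det _).mp hU1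
  have hdetk : IsUnit (1 - B ^ k).det := (Matrix.isUnit_iff_isUnit_det _).mp hinvT
  have hkey : (1 - B ^ k)⁻¹ * (∑ ℓ ∈ Finset.range k, B ^ ℓ) = (1 - B)⁻¹ := by
    have hsig : (∑ ℓ ∈ Finset.range k, B ^ ℓ) = (1 - B ^ k) * (1 - B)⁻¹ := by
      rw [← hgeom, Matrix.mul_assoc, Matrix.mul_nonsing_inv _ hdet1, Matrix.mul_one]
    rw [hsig, ← Matrix.mul_assoc, Matrix.nonsing_inv_mul _ hdetk, Matrix.one_mul]
  have hQTP : Qd * T * P = -(Qd * Ahat * P) := by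
    rw [hT, Matrix.mul_sub, Matrix.sub_mul, Matrix.mul_one, hQdP]
    simp [Matrix.sub_mul]
  constructor
  · rw [hkey, hQTP, hB]
    simp only [Matrix.mul_add, Matrix.sub_mul, Matrix.mul_sub, Matrix.one_mul,
      Matrix.mul_neg, Matrix.mul_assoc]
    abel
  · simp only [Matrix.mul_sub, Matrix.sub_mul, Matrix.one_mul, Matrix.mul_assoc]
end

section
/- Projected-relaxation form of the flow update: assume Q†Q = I. Then for every k ≥ 1, P + Q Σ_{ℓ=0}^{k−1} (Q†TQ)^ℓ (Q†TP) = Σ_{ℓ=0}^{k} (QQ†T)^ℓ P, i.e., the flow update equals k steps of relaxation with the projected propagator QQ†T applied to P. -/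
open Matrix

lemma swap_pow {n nf : ℕ} (T : Matrix (Fin n) (Fin n) ℂ)
    (Q : Matrix (Fin n) (Fin nf) ℂ) (Qd : Matrix (Fin nf) (Fin n) ℂ) (ℓ : ℕ) :
    Q * (Qd * T * Q) ^ ℓ = (Q * Qd * T) ^ ℓ * Q := by
  induction ℓ with
  | zero => simp
  | succ m ih =>
    rw [pow_succ, pow_succ, ← Matrix.mul_assoc Q, ih]
    simp only [Matrix.mul_assoc]

/-- Projected-relaxation form of the flow update: if `Q†Q = I`, then for every `k ≥ 1`,
`P + Q Σ_{ℓ=0}^{k−1} (Q†TQ)^ℓ (Q†TP) = Σ_{ℓ=0}^{k} (QQ†T)^ℓ P`. -/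
theorem flow_update_projected_relaxation
    (n nc nf : ℕ) (hn : 0 < n) (hnc : 0 < nc) (hnf : 0 < nf) (hsum : n = nc + nf)
    (T : Matrix (Fin n) (Fin n) ℂ)
    (P : Matrix (Fin n) (Fin nc) ℂ)
    (Q : Matrix (Fin n) (Fin nf) ℂ) (Qd : Matrix (Fin nf) (Fin n) ℂ)
    (hQdQ : Qd * Q = 1)
    (k : ℕ) (hk : 1 ≤ k) :
    P + Q * (∑ ℓ ∈ Finset.range k, (Qd * T * Q) ^ ℓ * (Qd * T * P))
      = ∑ ℓ ∈ Finset.range (k + 1), (Q * Qd * T) ^ ℓ * P := by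
  rw [Matrix.mul_sum, Finset.sum_range_succ', add_comm]
  simp only [pow_zero, one_mul]
  congr 1
  · apply Finset.sum_congr rfl
    intro ℓ _
    rw [← Matrix.mul_assoc, swap_pow, pow_succ]
    simp only [Matrix.mul_assoc]
  · rw [Matrix.one_mul]
end

section
/- Fixed points of the flow span T-invariant subspaces: assume the biorthogonality and completeness relations, k ≥ 1, that Σ_{ℓ=0}^{k−1} (Q†TQ)^ℓ is invertible, and that P is a fixed point of the flow, i.e., Q Σ_{ℓ=0}^{k−1} (Q†TQ)^ℓ (Q†TP) = 0. Then Q†TP = 0 and TP = P (P†TP); in particular the column space of P is invariant under T. -/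
open Matrix

/-- Fixed points of the flow span `T`-invariant subspaces: if `k ≥ 1`,
`Σ_{ℓ=0}^{k−1} (Q†TQ)^ℓ` is invertible, and `P` is a fixed point of the flow,
i.e. `Q Σ_{ℓ=0}^{k−1} (Q†TQ)^ℓ (Q†TP) = 0`, then `Q†TP = 0` and `TP = P (P†TP)`,
so the column space of `P` is invariant under `T`. -/
theorem flow_fixed_point_invariant_subspace
    (n nc nf : ℕ) (hn : 0 < n) (hnc : 0 < nc) (hnf : 0 < nf) (hsum : n = nc + nf)
    (T : Matrix (Fin n) (Fin n) ℂ)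
    (P : Matrix (Fin n) (Fin nc) ℂ) (Q : Matrix (Fin n) (Fin nf) ℂ)
    (Pd : Matrix (Fin nc) (Fin n) ℂ) (Qd : Matrix (Fin nf) (Fin n) ℂ)
    (hPdP : Pd * P = 1) (hQdQ : Qd * Q = 1) (hQdP : Qd * P = 0) (hPdQ : Pd * Q = 0)
    (hcomp : P * Pd + Q * Qd = 1)
    (k : ℕ) (hk : 1 ≤ k)
    (hS : IsUnit (∑ ℓ ∈ Finset.range k, (Qd * T * Q) ^ ℓ))
    (hfix : Q * (∑ ℓ ∈ Finset.range k, (Qd * T * Q) ^ ℓ) * (Qd * T * P) = 0) :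
    Qd * T * P = 0 ∧ T * P = P * (Pd * T * P) := by
  set S := ∑ ℓ ∈ Finset.range k, (Qd * T * Q) ^ ℓ with hSdef
  have h1 : S * (Qd * T * P) = 0 := by
    have := congrArg (fun M => Qd * M) hfix
    simpa [Matrix.mul_assoc, ← Matrix.mul_assoc Qd Q, hQdQ, Matrix.mul_assoc] using this
  obtain ⟨u, hu⟩ := hS
  have h0 : Qd * T * P = 0 := by
    have : ((u⁻¹ : (Matrix (Fin nf) (Fin nf) ℂ)ˣ) : Matrix (Fin nf) (Fin nf) ℂ) * (S * (Qd * T * P)) = 0 := by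
      rw [h1, Matrix.mul_zero]
    rwa [← Matrix.mul_assoc, ← hu, Units.inv_mul, Matrix.one_mul] at this
  refine ⟨h0, ?_⟩
  have := congrArg (fun M => M * (T * P)) hcomp
  simp only [Matrix.add_mul, Matrix.one_mul] at this
  calc T * P = (P * Pd + Q * Qd) * (T * P) := by rw [hcomp, Matrix.one_mul]
    _ = P * (Pd * T * P) + Q * (Qd * T * P) := by
        simp [Matrix.add_mul, Matrix.mul_assoc]
    _ = P * (Pd * T * P) := by rw [h0]; simp
end

section
/- Optimal interpolation and restriction from eigenvectors: let T be an n×n matrix, Â := I − T, and suppose V_R, V_L are n×n matrices with V_L V_R = I = V_R V_L and T V_R = V_R Λ for a diagonal matrix Λ (hence V_L T = Λ V_L). Split the columns of V_R into V_R^c (first n_c columns) and V_R^f (last n_f columns), the rows of V_L into V_L^c (first n_c rows) and V_L^f (last n_f rows), and Λ into diagonal blocks Λ_c (n_c×n_c) and Λ_f (n_f×n_f). Set P := V_R^c and R := V_L^c, and assume I − Λ_c is invertible. Then: (i) R Â P = I − Λ_c; (ii) V_L^f Â P = 0; (iii) R Â V_R^f = 0; and (iv) for every k ≥ 0 the two-grid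 error propagator satisfies (I − P (RÂP)^{−1} R Â) T^k = V_R^f Λ_f^k V_L^f. -/
open Matrix

/-- Optimal interpolation and restriction from eigenvectors: with `Â := I − T`,
bi-orthonormal eigenvector matrices `V_L V_R = I = V_R V_L`, `T V_R = V_R Λ` for a
diagonal `Λ` with diagonal blocks `Λ_c = diagonal dc` and `Λ_f = diagonal df`,
`P := V_R^c` (first `n_c` columns of `V_R`), `R := V_L^c` (first `n_c` rows of `V_L`)
and `I − Λ_c` invertible, we have:
(i) `R Â P = I − Λ_c`; (ii) `V_L^f Â P = 0`; (iii) `R Â V_R^f = 0`; and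
(iv) `(I − P (RÂP)⁻¹ R Â) T^k = V_R^f Λ_f^k V_L^f` for every `k ≥ 0`. -/
theorem optimal_interpolation_from_eigenvectors
    (nc nf : ℕ) (hnc : 0 < nc) (hnf : 0 < nf)
    (T : Matrix (Fin nc ⊕ Fin nf) (Fin nc ⊕ Fin nf) ℂ)
    (Ahat : Matrix (Fin nc ⊕ Fin nf) (Fin nc ⊕ Fin nf) ℂ) (hAhat : Ahat = 1 - T)
    (VR VL : Matrix (Fin nc ⊕ Fin nf) (Fin nc ⊕ Fin nf) ℂ)
    (hLR : VL * VR = 1) (hRL : VR * VL = 1)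
    (dc : Fin nc → ℂ) (df : Fin nf → ℂ)
    (hTV : T * VR = VR * Matrix.fromBlocks (Matrix.diagonal dc) 0 0 (Matrix.diagonal df))
    (P : Matrix (Fin nc ⊕ Fin nf) (Fin nc) ℂ) (hP : P = VR.toCols₁)
    (R : Matrix (Fin nc) (Fin nc ⊕ Fin nf) ℂ) (hR : R = VL.toRows₁)
    (hinv : IsUnit (1 - Matrix.diagonal dc)) :
    R * Ahat * P = 1 - Matrix.diagonal dc ∧
    VL.toRows₂ * Ahat * P = 0 ∧
    R * Ahat * VR.toCols₂ = 0 ∧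
    ∀ k : ℕ,
      (1 - P * (R * Ahat * P)⁻¹ * R * Ahat) * T ^ k
        = VR.toCols₂ * (Matrix.diagonal df) ^ k * VL.toRows₂ := by
  set Pc := VR.toCols₁ with hPc
  set Pf := VR.toCols₂ with hPf
  set Rc := VL.toRows₁ with hRc
  set Rf := VL.toRows₂ with hRf
  have hVR : VR = fromCols Pc Pf := (fromCols_toCols VR).symm
  have hVL : VL = fromRows Rc Rf := (fromRows_toRows VL).symm
  subst hP hR hAhat
  -- block identities from VL*VR = 1
  have hblk : fromBlocks (Rc * Pc) (Rc * Pf) (Rf * Pc) (Rf * Pf)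
      = fromBlocks (1 : Matrix (Fin nc) (Fin nc) ℂ) 0 0 (1 : Matrix (Fin nf) (Fin nf) ℂ) := by
    rw [← fromRows_mul_fromCols, ← hVR, ← hVL, hLR, ← fromBlocks_one]
  have h11 : Rc * Pc = 1 := by
    have := congrArg Matrix.toBlocks₁₁ hblk
    simp only [toBlocks_fromBlocks₁₁] at this; exact this
  have h12 : Rc * Pf = 0 := by
    have := congrArg Matrix.toBlocks₁₂ hblk
    simp only [toBlocks_fromBlocks₁₂] at this; exact this
  have h21 : Rf * Pc = 0 := by
    have := congrArg Matrix.toBlocks₂₁ hblk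
    simp only [toBlocks_fromBlocks₂₁] at this; exact this
  -- eigen equations componentwise
  have hTVc : fromCols (T * Pc) (T * Pf)
      = fromCols (Pc * Matrix.diagonal dc) (Pf * Matrix.diagonal df) := by
    rw [← mul_fromCols, ← hVR, hTV, hVR, fromCols_mul_fromBlocks]
    simp
  have hTPc : T * Pc = Pc * Matrix.diagonal dc := by
    have := congrArg toCols₁ hTVc
    simpa only [toCols₁_fromCols] using this
  have hTPf : T * Pf = Pf * Matrix.diagonal df := by
    have := congrArg toCols₂ hTVc
    simpa only [toCols₂_fromCols] using this
  -- item (i)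
  have hi : Rc * (1 - T) * Pc = 1 - Matrix.diagonal dc := by
    rw [Matrix.mul_sub, Matrix.mul_one, Matrix.sub_mul, Matrix.mul_assoc, hTPc,
      ← Matrix.mul_assoc, h11, Matrix.one_mul]
  have hii : Rf * (1 - T) * Pc = 0 := by
    rw [Matrix.mul_sub, Matrix.mul_one, Matrix.sub_mul, Matrix.mul_assoc, hTPc,
      ← Matrix.mul_assoc, h21, Matrix.zero_mul, sub_zero]
  have hiii : Rc * (1 - T) * Pf = 0 := by
    rw [Matrix.mul_sub, Matrix.mul_one, Matrix.sub_mul, Matrix.mul_assoc, hTPf,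
      ← Matrix.mul_assoc, h12, Matrix.zero_mul, sub_zero]
  refine ⟨hi, hii, hiii, fun k => ?_⟩
  -- T^k decomposition
  have hTk : T ^ k = Pc * (Matrix.diagonal dc) ^ k * Rc
      + Pf * (Matrix.diagonal df) ^ k * Rf := by
    induction k with
    | zero =>
      rw [pow_zero, pow_zero, pow_zero, Matrix.mul_one, Matrix.mul_one,
        ← fromCols_mul_fromRows, ← hVR, ← hVL, hRL]
    | succ k ih =>
      rw [pow_succ', ih, Matrix.mul_add, ← Matrix.mul_assoc, ← Matrix.mul_assoc,
        ← Matrix.mul_assoc, ← Matrix.mul_assoc, hTPc, hTPf,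
        pow_succ' (Matrix.diagonal dc), pow_succ' (Matrix.diagonal df)]
      simp only [Matrix.mul_assoc]
  -- inverse fact
  have hinv' : (Rc * (1 - T) * Pc)⁻¹ * (Rc * (1 - T) * Pc) = 1 := by
    rw [hi]
    exact Matrix.nonsing_inv_mul _ ((Matrix.isUnit_iff_isUnit_det _).mp hinv)
  have hEPc : (1 - Pc * (Rc * (1 - T) * Pc)⁻¹ * Rc * (1 - T)) * Pc = 0 := by
    rw [Matrix.sub_mul, Matrix.one_mul, Matrix.mul_assoc _ Rc,
      Matrix.mul_assoc (Pc * (Rc * (1 - T) * Pc)⁻¹) (Rc * (1 - T)) Pc,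
      Matrix.mul_assoc Pc, hinv', Matrix.mul_one, sub_self]
  have hEPf : (1 - Pc * (Rc * (1 - T) * Pc)⁻¹ * Rc * (1 - T)) * Pf = Pf := by
    rw [Matrix.sub_mul, Matrix.one_mul, Matrix.mul_assoc _ Rc,
      Matrix.mul_assoc (Pc * (Rc * (1 - T) * Pc)⁻¹) (Rc * (1 - T)) Pf, hiii,
      Matrix.mul_zero, sub_zero]
  rw [hTk, Matrix.mul_add, ← Matrix.mul_assoc, ← Matrix.mul_assoc, ← Matrix.mul_assoc,
    ← Matrix.mul_assoc, hEPc, hEPf, Matrix.zero_mul, Matrix.zero_mul, zero_add]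
end
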